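/- arXiv:2006.00137 — 3 statements merged into one kernel-verified Lean document; each statement's English description precedes it below -/
import Mathlib

section
/- Fix a prime p. The map sending a ball B ∈ 𝔹(ℚ_p) to the ℤ_p-submodule of ℚ_p² generated by the set {(1, b) : b ∈ B} is injective: distinct balls of ℤ_p generate distinct ℤ_p-submodules of ℚ_p². -/
/-- The ball `B(a,n) = {x ∈ ℤ_p : v_p(x − a) ≥ n}`, described equivalently
via the `p`-adic norm as `{x : ‖x - a‖ ≤ p ^ (-n)}`. -/
def pBall (p : ℕ) [Fact p.Prime] (a : ℤ_[p]) (n : ℕ) : Set ℤ_[p] :=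
  {x : ℤ_[p] | ‖x - a‖ ≤ (p : ℝ) ^ (-(n : ℤ))}

/-- `𝔹(ℚ_p)`: the collection of all balls in `ℤ_p`. -/
def pBalls (p : ℕ) [Fact p.Prime] : Set (Set ℤ_[p]) :=
  {B : Set ℤ_[p] | ∃ (a : ℤ_[p]) (n : ℕ), B = pBall p a n}

section Aux

variable (p : ℕ) [Fact p.Prime]

lemma pBall_dvd {a x : ℤ_[p]} {n : ℕ} :
    x ∈ pBall p a n ↔ (p : ℤ_[p]) ^ n ∣ (x - a) := by
  rw [pBall, Set.mem_setOf_eq, PadicInt.norm_le_pow_iff_mem_span_pow,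
    Ideal.mem_span_singleton]

/-- The projection `(u, v) ↦ v - a * u` as a `ℤ_p`-linear map. -/
noncomputable def phi (a : ℤ_[p]) : ℚ_[p] × ℚ_[p] →ₗ[ℤ_[p]] ℚ_[p] where
  toFun z := z.2 - (a : ℚ_[p]) * z.1
  map_add' z w := by simp; ring
  map_smul' c z := by
    simp only [Prod.smul_fst, Prod.smul_snd, RingHom.id_apply]
    show (c : ℚ_[p]) * z.2 - (a:ℚ_[p]) * ((c:ℚ_[p]) * z.1) = (c:ℚ_[p]) * (z.2 - (a:ℚ_[p]) * z.1)
    ring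

lemma mem_span_iff (a : ℤ_[p]) (n : ℕ) (x : ℤ_[p]) :
    ((1 : ℚ_[p]), (x : ℚ_[p])) ∈ Submodule.span ℤ_[p]
      ((fun b : ℤ_[p] => ((1 : ℚ_[p]), (b : ℚ_[p]))) '' pBall p a n) ↔ x ∈ pBall p a n := by
  constructor
  · intro hx
    have hle : Submodule.span ℤ_[p]
        ((fun b : ℤ_[p] => ((1 : ℚ_[p]), (b : ℚ_[p]))) '' pBall p a n) ≤
        (Submodule.span ℤ_[p] {((p : ℚ_[p]) ^ n)}).comap (phi p a) := by
      rw [Submodule.span_le]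
      rintro _ ⟨b, hb, rfl⟩
      obtain ⟨c, hc⟩ := (pBall_dvd p).1 hb
      refine Submodule.mem_comap.2 ?_
      have h1 : phi p a ((1 : ℚ_[p]), (b : ℚ_[p])) = c • ((p : ℚ_[p]) ^ n) := by
        show (b : ℚ_[p]) - (a : ℚ_[p]) * 1 = (c : ℚ_[p]) * ((p : ℚ_[p]) ^ n)
        have h2 := congrArg (fun z : ℤ_[p] => (z : ℚ_[p])) hc
        push_cast at h2
        linear_combination h2
      rw [h1]
      exact Submodule.smul_mem _ _ (Submodule.mem_span_singleton_self _)
    have hm := Submodule.mem_comap.1 (hle hx)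
    obtain ⟨c, hc⟩ := Submodule.mem_span_singleton.1 hm
    rw [pBall_dvd p]
    refine ⟨c, Subtype.coe_injective ?_⟩
    have hphi : phi p a ((1 : ℚ_[p]), (x : ℚ_[p])) = (x : ℚ_[p]) - (a : ℚ_[p]) * 1 := rfl
    rw [hphi] at hc
    have hc' : (c : ℚ_[p]) * ((p : ℚ_[p]) ^ n) = (x : ℚ_[p]) - (a : ℚ_[p]) * 1 := hc
    push_cast
    linear_combination -hc' 
  · intro hx
    obtain ⟨c, hc⟩ := (pBall_dvd p).1 hx
    have ha : ((1 : ℚ_[p]), (a : ℚ_[p])) ∈ Submodule.span ℤ_[p]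
        ((fun b : ℤ_[p] => ((1 : ℚ_[p]), (b : ℚ_[p]))) '' pBall p a n) :=
      Submodule.subset_span ⟨a, by simp [pBall_dvd], rfl⟩
    have hb : ((1 : ℚ_[p]), ((a + p ^ n : ℤ_[p]) : ℚ_[p])) ∈ Submodule.span ℤ_[p]
        ((fun b : ℤ_[p] => ((1 : ℚ_[p]), (b : ℚ_[p]))) '' pBall p a n) :=
      Submodule.subset_span ⟨a + p ^ n, by simp [pBall_dvd], rfl⟩
    have key : ((1 : ℚ_[p]), (x : ℚ_[p])) =
        (1 - c) • ((1 : ℚ_[p]), (a : ℚ_[p])) + c • ((1 : ℚ_[p]), ((a + p ^ n : ℤ_[p]) : ℚ_[p])) := by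
      ext
      · show (1:ℚ_[p]) = ((1 - c : ℤ_[p]):ℚ_[p]) * 1 + (c:ℚ_[p]) * 1
        push_cast; ring
      · show (x:ℚ_[p]) = ((1 - c : ℤ_[p]):ℚ_[p]) * (a:ℚ_[p]) + (c:ℚ_[p]) * ((a + p^n : ℤ_[p]):ℚ_[p])
        have h2 := congrArg (fun z : ℤ_[p] => (z : ℚ_[p])) hc
        push_cast at h2 ⊢
        linear_combination h2
    rw [key]
    exact Submodule.add_mem _ (Submodule.smul_mem _ _ ha) (Submodule.smul_mem _ _ hb)

end Aux

/-- The map sending a ball `B ∈ 𝔹(ℚ_p)` to the `ℤ_p`-submodule of `ℚ_p²` generated by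
`{(1, b) : b ∈ B}` is injective. -/
theorem ball_to_lattice_injective (p : ℕ) [Fact p.Prime] :
    Function.Injective (fun B : ↥(pBalls p) =>
      Submodule.span ℤ_[p]
        ((fun b : ℤ_[p] => ((1 : ℚ_[p]), (b : ℚ_[p]))) '' (B : Set ℤ_[p]))) := by
  rintro ⟨B1, a1, n1, rfl⟩ ⟨B2, a2, n2, rfl⟩ h
  simp only at h
  ext x
  rw [← mem_span_iff p a1 n1 x, ← mem_span_iff p a2 n2 x, h]
end

section
/- Trace definability is transitive: if a first-order structure M trace defines a structure O, and O trace defines a structure P, then M trace defines P. -/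
open FirstOrder

/-- `M` trace defines `O` via `τ : O → M^m`: every subset of `O^n` definable in `O`
with parameters is the `τ`-preimage of a subset of `(M^m)^n` definable in `M`
with parameters. -/
def TraceDefinesVia (L : Language) (M : Type*) [L.Structure M]
    (L' : Language) (O : Type*) [L'.Structure O]
    {m : ℕ} (τ : O → (Fin m → M)) : Prop :=
  ∀ (n : ℕ) (X : Set (Fin n → O)), Set.Definable (Set.univ : Set O) L' X →
    ∃ Y : Set (Fin n × Fin m → M), Set.Definable (Set.univ : Set M) L Y ∧
      X = {a : Fin n → O | (fun q => τ (a q.1) q.2) ∈ Y}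

/-- `M` trace defines `O`: `M` trace defines `O` via some injection `τ : O → M^m`,
`m ≥ 1`. -/
def TraceDefines (L : Language) (M : Type*) [L.Structure M]
    (L' : Language) (O : Type*) [L'.Structure O] : Prop :=
  ∃ (m : ℕ) (τ : O → (Fin m → M)), 1 ≤ m ∧ Function.Injective τ ∧
    TraceDefinesVia L M L' O τ


/-- Trace definability is transitive. -/
theorem traceDefines_trans (L₁ : Language) (M : Type*) [L₁.Structure M]
    (L₂ : Language) (O : Type*) [L₂.Structure O]
    (L₃ : Language) (P : Type*) [L₃.Structure P]
    (h₁ : TraceDefines L₁ M L₂ O) (h₂ : TraceDefines L₂ O L₃ P) :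
    TraceDefines L₁ M L₃ P := by
  obtain ⟨m, τ₁, hm, hτ₁inj, hτ₁⟩ := h₁
  obtain ⟨k, τ₂, hk, hτ₂inj, hτ₂⟩ := h₂
  classical
  set e₂ : Fin k × Fin m ≃ Fin (k * m) := finProdFinEquiv with he₂
  refine ⟨k * m, fun p j => τ₁ (τ₂ p (e₂.symm j).1) (e₂.symm j).2,
    Nat.one_le_iff_ne_zero.mpr (by positivity), ?_, ?_⟩
  · intro p p' hpp'
    apply hτ₂inj
    funext i
    apply hτ₁inj
    funext j
    have := congrFun hpp' (e₂ (i, j))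
    simpa using this
  · intro n X hX
    obtain ⟨Y₂, hY₂def, hY₂⟩ := hτ₂ n X hX
    set e₁ : Fin (n * k) ≃ Fin n × Fin k := (finProdFinEquiv : Fin n × Fin k ≃ Fin (n * k)).symm with he₁
    have hY₂'def : Set.Definable (Set.univ : Set O) L₂
        ((fun g : Fin (n * k) → O => g ∘ e₁.symm) ⁻¹' Y₂) :=
      hY₂def.preimage_comp (e₁.symm : Fin n × Fin k → Fin (n * k))
    obtain ⟨Y₁, hY₁def, hY₁⟩ := hτ₁ (n * k) _ hY₂'def
    set E : Fin (n * k) × Fin m → Fin n × Fin (k * m) :=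
      fun q => ((e₁ q.1).1, e₂ ((e₁ q.1).2, q.2)) with hE
    refine ⟨(fun h : Fin n × Fin (k * m) → M => h ∘ E) ⁻¹' Y₁,
      hY₁def.preimage_comp E, ?_⟩
    ext a
    have hb : ((fun q : Fin n × Fin (k * m) =>
        τ₁ (τ₂ (a q.1) (e₂.symm q.2).1) (e₂.symm q.2).2) ∘ E)
        = fun q : Fin (n * k) × Fin m =>
            τ₁ ((fun i => τ₂ (a (e₁ i).1) (e₁ i).2) q.1) q.2 := by
      funext q
      simp [hE]
    have hmem : (fun i : Fin (n * k) => τ₂ (a (e₁ i).1) (e₁ i).2) ∈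
        ((fun g : Fin (n * k) → O => g ∘ e₁.symm) ⁻¹' Y₂)
        ↔ a ∈ X := by
      rw [hY₂]
      have : ((fun i : Fin (n * k) => τ₂ (a (e₁ i).1) (e₁ i).2) ∘ e₁.symm)
          = fun q : Fin n × Fin k => τ₂ (a q.1) q.2 := by
        funext q; simp
      simp only [Set.mem_preimage, Set.mem_setOf_eq, this]
    constructor
    · intro ha
      simp only [Set.mem_setOf_eq, Set.mem_preimage, hb]
      have : (fun i : Fin (n * k) => τ₂ (a (e₁ i).1) (e₁ i).2) ∈
          ((fun g : Fin (n * k) → O => g ∘ e₁.symm) ⁻¹' Y₂) := hmem.mpr ha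
      rw [hY₁] at this
      exact this
    · intro ha
      simp only [Set.mem_setOf_eq, Set.mem_preimage, hb] at ha
      apply hmem.mp
      rw [hY₁]
      exact ha
end

section
/- If a first-order structure M has the strong Erdős–Hajnal property, then every structure O trace definable in M also has the strong Erdős–Hajnal property. -/
open FirstOrder

/-- `M` has the strong Erdős–Hajnal property: for every definable
`X ⊆ M^m × M^n` there is `δ > 0` such that all finite `A ⊆ M^m`, `B ⊆ M^n` admit
`A' ⊆ A`, `B' ⊆ B` with `|A'| ≥ δ|A|`, `|B'| ≥ δ|B|` and `A' × B'` contained in or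
disjoint from `X`. -/
def StrongErdosHajnal (L : Language) (M : Type*) [L.Structure M] : Prop :=
  ∀ (m n : ℕ) (X : Set (Fin m ⊕ Fin n → M)), Set.Definable (Set.univ : Set M) L X →
    ∃ δ : ℝ, 0 < δ ∧
      ∀ (A : Finset (Fin m → M)) (B : Finset (Fin n → M)),
        ∃ (A' : Finset (Fin m → M)) (B' : Finset (Fin n → M)),
          A' ⊆ A ∧ B' ⊆ B ∧
          δ * A.card ≤ A'.card ∧ δ * B.card ≤ B'.card ∧
          ((∀ a ∈ A', ∀ b ∈ B', Sum.elim a b ∈ X) ∨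
            (∀ a ∈ A', ∀ b ∈ B', Sum.elim a b ∉ X))

/-- The strong Erdős–Hajnal property passes to trace definable structures. -/
theorem strongErdosHajnal_of_traceDefines (L : Language) (M : Type*) [L.Structure M]
    (L' : Language) (O : Type*) [L'.Structure O]
    (hM : StrongErdosHajnal L M) (h : TraceDefines L M L' O) :
    StrongErdosHajnal L' O := by
  classical
  obtain ⟨k, τ, hk, τinj, htd⟩ := h
  intro m n X hX
  -- transfer X to Fin (m+n)
  set e : Fin m ⊕ Fin n ≃ Fin (m + n) := finSumFinEquiv with he
  set X₀ : Set (Fin (m + n) → O) := (fun g : Fin (m + n) → O => g ∘ e) ⁻¹' X with hX₀def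
  have hX₀ : Set.Definable (Set.univ : Set O) L' X₀ := hX.preimage_comp e
  obtain ⟨Y, hY, hXY⟩ := htd (m + n) X₀ hX₀
  -- the reindexing map
  set σ : Fin (m + n) × Fin k → Fin (m * k) ⊕ Fin (n * k) :=
    fun q => Sum.map (fun i => finProdFinEquiv (i, q.2)) (fun i => finProdFinEquiv (i, q.2))
      (e.symm q.1) with hσ
  set Z : Set (Fin (m * k) ⊕ Fin (n * k) → M) :=
    (fun g : Fin (m * k) ⊕ Fin (n * k) → M => g ∘ σ) ⁻¹' Y with hZdef
  have hZ : Set.Definable (Set.univ : Set M) L Z := hY.preimage_comp σ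
  obtain ⟨δ, hδ, hEH⟩ := hM (m * k) (n * k) Z hZ
  refine ⟨δ, hδ, ?_⟩
  intro A B
  -- coding maps
  set F : (Fin m → O) → (Fin (m * k) → M) :=
    fun a x => τ (a (finProdFinEquiv.symm x).1) (finProdFinEquiv.symm x).2 with hF
  set G : (Fin n → O) → (Fin (n * k) → M) :=
    fun b x => τ (b (finProdFinEquiv.symm x).1) (finProdFinEquiv.symm x).2 with hG
  have Finj : Function.Injective F := by
    intro a a' hEq
    funext i
    apply τinj
    funext j
    have := congrFun hEq (finProdFinEquiv (i, j))
    simp only [hF, Equiv.symm_apply_apply] at this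
    exact this
  have Ginj : Function.Injective G := by
    intro a a' hEq
    funext i
    apply τinj
    funext j
    have := congrFun hEq (finProdFinEquiv (i, j))
    simp only [hG, Equiv.symm_apply_apply] at this
    exact this
  -- key correspondence
  have key : ∀ (a : Fin m → O) (b : Fin n → O),
      Sum.elim a b ∈ X ↔ Sum.elim (F a) (G b) ∈ Z := by
    intro a b
    have h1 : Sum.elim a b ∈ X ↔ (Sum.elim a b ∘ e.symm) ∈ X₀ := by
      simp only [hX₀def, Set.mem_preimage]
      constructor
      · intro hx
        convert hx using 1
        funext x; simp
      · intro hx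
        convert hx using 1
        funext x; simp
    have h2 : (Sum.elim a b ∘ e.symm) ∈ X₀ ↔
        (fun q : Fin (m + n) × Fin k => τ ((Sum.elim a b ∘ e.symm) q.1) q.2) ∈ Y := by
      rw [hXY]; rfl
    have h3 : (fun q : Fin (m + n) × Fin k => τ ((Sum.elim a b ∘ e.symm) q.1) q.2)
        = (Sum.elim (F a) (G b)) ∘ σ := by
      funext q
      simp only [hσ, Function.comp_apply]
      cases hq : e.symm q.1 with
      | inl i => simp only [Sum.map_inl, Sum.elim_inl, hF, hq, Equiv.symm_apply_apply]
      | inr i => simp only [Sum.map_inr, Sum.elim_inr, hG, hq, Equiv.symm_apply_apply]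
    rw [h1, h2, h3]
    rfl
  obtain ⟨A'', B'', hA''sub, hB''sub, hA''card, hB''card, hhom⟩ := hEH (A.image F) (B.image G)
  refine ⟨A.filter (fun a => F a ∈ A''), B.filter (fun b => G b ∈ B''),
    Finset.filter_subset _ _, Finset.filter_subset _ _, ?_, ?_, ?_⟩
  · have h1 : A'' ⊆ (A.filter (fun a => F a ∈ A'')).image F := by
      intro x hx
      obtain ⟨a, ha, rfl⟩ := Finset.mem_image.mp (hA''sub hx)
      exact Finset.mem_image_of_mem F (Finset.mem_filter.mpr ⟨ha, hx⟩)
    calc δ * A.card = δ * (A.image F).card := by rw [Finset.card_image_of_injective _ Finj]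
      _ ≤ A''.card := hA''card
      _ ≤ ((A.filter (fun a => F a ∈ A'')).image F).card := by
          exact_mod_cast Finset.card_le_card h1
      _ ≤ (A.filter (fun a => F a ∈ A'')).card := by
          exact_mod_cast Finset.card_image_le
  · have h1 : B'' ⊆ (B.filter (fun b => G b ∈ B'')).image G := by
      intro x hx
      obtain ⟨b, hb, rfl⟩ := Finset.mem_image.mp (hB''sub hx)
      exact Finset.mem_image_of_mem G (Finset.mem_filter.mpr ⟨hb, hx⟩)
    calc δ * B.card = δ * (B.image G).card := by rw [Finset.card_image_of_injective _ Ginj]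
      _ ≤ B''.card := hB''card
      _ ≤ ((B.filter (fun b => G b ∈ B'')).image G).card := by
          exact_mod_cast Finset.card_le_card h1
      _ ≤ (B.filter (fun b => G b ∈ B'')).card := by
          exact_mod_cast Finset.card_image_le
  · rcases hhom with hpos | hneg
    · left
      intro a ha b hb
      rw [key]
      exact hpos _ (Finset.mem_filter.mp ha).2 _ (Finset.mem_filter.mp hb).2
    · right
      intro a ha b hb
      rw [key]
      exact hneg _ (Finset.mem_filter.mp ha).2 _ (Finset.mem_filter.mp hb).2
end
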